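/- arXiv:2110.00063 — 7 statements merged into one kernel-verified Lean document; each statement's English description precedes it below -/
import Mathlib

section
/- The function f defined on subsets of E ∪ L by f(T) = 2|V(T)| − 3 if T ⊆ E and f(T) = 2|V(T)| if T ∩ L ≠ ∅ is submodular: for all T₁, T₂ ⊆ E ∪ L, f(T₁) + f(T₂) ≥ f(T₁ ∪ T₂) + f(T₁ ∩ T₂). -/
/-- The set of vertices incident with the edges and loops in `T`. -/
def vSet {V ε : Type*} [DecidableEq V] (ends : ε → Finset V) (T : Finset ε) : Finset V :=
  T.biUnion ends

/-- The count function `f(T) = 2|V(T)| - 3` if `T ⊆ E` (i.e. `T` contains no loops),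
and `f(T) = 2|V(T)|` if `T` contains a loop of `L`. -/
def fCount {V ε : Type*} [DecidableEq V] [DecidableEq ε] (L : Finset ε) (ends : ε → Finset V)
    (T : Finset ε) : ℤ :=
  if (T ∩ L).Nonempty then 2 * (vSet ends T).card else 2 * (vSet ends T).card - 3

/-!
Write `f(T) = 2|V(T)| - 3 + 3·[T meets L]`; both non-constant summands are submodular.
`T ↦ |V(T)|` is a coverage function: `V(T₁ ∪ T₂) = V(T₁) ∪ V(T₂)` and
`V(T₁ ∩ T₂) ⊆ V(T₁) ∩ V(T₂)`, so inclusion–exclusion gives the inequality. For the indicator,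
if `T₁ ∩ T₂` meets `L` then so do both `T₁` and `T₂`, and if `T₁ ∪ T₂` meets `L` then so does
one of them.
-/

open Finset

section

variable {V ε : Type*} [DecidableEq V]

theorem vSet_mono (ends : ε → Finset V) {S T : Finset ε} (h : S ⊆ T) :
    vSet ends S ⊆ vSet ends T :=
  biUnion_subset_biUnion_of_subset_left ends h

variable [DecidableEq ε]

theorem vSet_union (ends : ε → Finset V) (S T : Finset ε) :
    vSet ends (S ∪ T) = vSet ends S ∪ vSet ends T :=
  union_biUnion

theorem card_vSet_union_add_card_vSet_inter_le (ends : ε → Finset V) (S T : Finset ε) :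
    #(vSet ends (S ∪ T)) + #(vSet ends (S ∩ T)) ≤ #(vSet ends S) + #(vSet ends T) :=
  calc #(vSet ends (S ∪ T)) + #(vSet ends (S ∩ T))
      ≤ #(vSet ends S ∪ vSet ends T) + #(vSet ends S ∩ vSet ends T) := by
        rw [vSet_union]
        exact Nat.add_le_add_left (card_le_card <| subset_inter
          (vSet_mono ends inter_subset_left) (vSet_mono ends inter_subset_right)) _
    _ = #(vSet ends S) + #(vSet ends T) := card_union_add_card_inter _ _

theorem ite_inter_nonempty_union_add_inter_le (L S T : Finset ε) :
    ((if ((S ∪ T) ∩ L).Nonempty then 1 else 0) + if (S ∩ T ∩ L).Nonempty then 1 else 0 : ℤ) ≤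
      (if (S ∩ L).Nonempty then 1 else 0) + if (T ∩ L).Nonempty then 1 else 0 := by
  have h_union : ((S ∪ T) ∩ L).Nonempty → (S ∩ L).Nonempty ∨ (T ∩ L).Nonempty := by
    simp only [union_inter_distrib_right, union_nonempty, imp_self]
  have h_left : (S ∩ T ∩ L).Nonempty → (S ∩ L).Nonempty :=
    fun h ↦ h.mono <| inter_subset_inter_right inter_subset_left
  have h_right : (S ∩ T ∩ L).Nonempty → (T ∩ L).Nonempty :=
    fun h ↦ h.mono <| inter_subset_inter_right inter_subset_right
  split_ifs <;> simp_all

theorem fCount_eq (L : Finset ε) (ends : ε → Finset V) (T : Finset ε) :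
    fCount L ends T = 2 * #(vSet ends T) - 3 + 3 * if (T ∩ L).Nonempty then 1 else 0 := by
  unfold fCount
  split_ifs <;> ring

end

theorem fCount_submodular_general {V ε : Type*} [DecidableEq V] [DecidableEq ε]
    (L : Finset ε) (ends : ε → Finset V)
    (T₁ T₂ : Finset ε) :
    fCount L ends (T₁ ∪ T₂) + fCount L ends (T₁ ∩ T₂) ≤
      fCount L ends T₁ + fCount L ends T₂ := by
  have h_card : (#(vSet ends (T₁ ∪ T₂)) + #(vSet ends (T₁ ∩ T₂)) : ℤ) ≤
      #(vSet ends T₁) + #(vSet ends T₂) := by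
    exact_mod_cast card_vSet_union_add_card_vSet_inter_le ends T₁ T₂
  have h_loops := ite_inter_nonempty_union_add_inter_le L T₁ T₂
  simp only [fCount_eq]
  linarith

/-- The function `f` is submodular on subsets of `E ∪ L`. -/
theorem fCount_submodular {V ε : Type*} [Fintype V] [DecidableEq V] [DecidableEq ε]
    (E L : Finset ε) (ends : ε → Finset V)
    (hdisj : Disjoint E L)
    (hE : ∀ e ∈ E, (ends e).card = 2) (hL : ∀ l ∈ L, (ends l).card = 1)
    (T₁ T₂ : Finset ε) (h₁ : T₁ ⊆ E ∪ L) (h₂ : T₂ ⊆ E ∪ L) :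
    fCount L ends (T₁ ∪ T₂) + fCount L ends (T₁ ∩ T₂) ≤
      fCount L ends T₁ + fCount L ends T₂ :=
  fCount_submodular_general L ends T₁ T₂
end

section
/- Let G = (V, E, L) be a (2,0,3)-graded-sparse looped simple graph and let X, Y ⊆ V be mixed tight sets (i.e., i_{E∪L}(X) = 2|X| and i_{E∪L}(Y) = 2|Y|). Then X ∪ Y and X ∩ Y are mixed tight sets. -/
attribute [local instance] Classical.propDecidable

/-- `i_E(S)`: the number of edges in `E` with both endpoints in `S`. -/
noncomputable def iE {V : Type*} [DecidableEq V] (E : Finset (Sym2 V)) (S : Finset V) : ℕ :=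
  (E.filter fun e => ∀ v ∈ e, v ∈ S).card

/-- `i_L(S)`: the number of loops in `L` at vertices of `S`. -/
noncomputable def iL {V ι : Type*} (L : Finset ι) (lend : ι → V) (S : Finset V) : ℕ :=
  (L.filter fun l => lend l ∈ S).card

/-- A looped simple graph `(V, E, L)` is `(2,0,3)`-graded-sparse if `i_E(S) ≤ 2|S| - 3`
whenever `S` induces at least one edge, and `i_E(S) + i_L(S) ≤ 2|S|` for all `S`. -/
def GradedSparse {V ι : Type*} [DecidableEq V] (E : Finset (Sym2 V)) (L : Finset ι)
    (lend : ι → V) : Prop :=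
  (∀ S : Finset V, 0 < iE E S → (iE E S : ℤ) ≤ 2 * S.card - 3) ∧
  (∀ S : Finset V, (iE E S : ℤ) + iL L lend S ≤ 2 * S.card)

/-- `X` is a mixed tight set: `i_{E∪L}(X) = 2|X|`. -/
def MixedTight {V ι : Type*} [DecidableEq V] (E : Finset (Sym2 V)) (L : Finset ι)
    (lend : ι → V) (X : Finset V) : Prop :=
  (iE E X : ℤ) + iL L lend X = 2 * X.card

/-- `Y` is a pure tight set: `i_E(Y) = 2|Y| - 3`. -/
def PureTight {V : Type*} [DecidableEq V] (E : Finset (Sym2 V)) (Y : Finset V) : Prop :=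
  (iE E Y : ℤ) = 2 * Y.card - 3

/-- The union and intersection of two mixed tight sets are mixed tight. -/
theorem mixed_mixed {V ι : Type*} [Fintype V] [DecidableEq V]
    (E : Finset (Sym2 V)) (hE : ∀ e ∈ E, ¬ e.IsDiag) (L : Finset ι) (lend : ι → V)
    (hsp : GradedSparse E L lend) (X Y : Finset V)
    (hX : MixedTight E L lend X) (hY : MixedTight E L lend Y) :
    MixedTight E L lend (X ∪ Y) ∧ MixedTight E L lend (X ∩ Y) := by
  obtain ⟨_, h2⟩ := hsp
  -- bridging equalities (instance-insensitive via congr!)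
  have eE : ∀ S : Finset V, iE E S = (E.filter fun e => ∀ v ∈ e, v ∈ S).card := by
    intro S; unfold iE; congr!
  have eL : ∀ S : Finset V, iL L lend S = (L.filter fun l => lend l ∈ S).card := by
    intro S; unfold iL; congr!
  -- edge count supermodularity
  have h1 : (E.filter fun e => ∀ v ∈ e, v ∈ X) ∪ (E.filter fun e => ∀ v ∈ e, v ∈ Y)
      ⊆ E.filter fun e => ∀ v ∈ e, v ∈ X ∪ Y := by
    intro e he
    simp only [Finset.mem_union, Finset.mem_filter] at he ⊢
    rcases he with ⟨he, h⟩ | ⟨he, h⟩ <;> exact ⟨he, fun v hv => by simp [h v hv]⟩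
  have h2' : (E.filter fun e => ∀ v ∈ e, v ∈ X) ∩ (E.filter fun e => ∀ v ∈ e, v ∈ Y)
      = E.filter fun e => ∀ v ∈ e, v ∈ X ∩ Y := by
    ext e
    simp only [Finset.mem_inter, Finset.mem_filter]
    constructor
    · rintro ⟨⟨he, hx⟩, _, hy⟩
      exact ⟨he, fun v hv => ⟨hx v hv, hy v hv⟩⟩
    · rintro ⟨he, h⟩
      exact ⟨⟨he, fun v hv => (h v hv).1⟩, he,
        fun v hv => (h v hv).2⟩
  have hkey := Finset.card_union_add_card_inter (E.filter fun e => ∀ v ∈ e, v ∈ X)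
    (E.filter fun e => ∀ v ∈ e, v ∈ Y)
  rw [h2'] at hkey
  have hle := Finset.card_le_card h1
  have hEsup : iE E X + iE E Y ≤ iE E (X ∪ Y) + iE E (X ∩ Y) := by
    rw [eE X, eE Y, eE (X ∪ Y), eE (X ∩ Y)]
    omega
  -- loop count modularity
  have hLu : L.filter (fun l => lend l ∈ X ∪ Y)
      = L.filter (fun l => lend l ∈ X) ∪ L.filter (fun l => lend l ∈ Y) := by
    ext l
    simp only [Finset.mem_filter, Finset.mem_union]
    tauto
  have hLi : L.filter (fun l => lend l ∈ X ∩ Y)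
      = L.filter (fun l => lend l ∈ X) ∩ L.filter (fun l => lend l ∈ Y) := by
    ext l
    simp only [Finset.mem_filter, Finset.mem_inter]
    tauto
  have hLkey := Finset.card_union_add_card_inter (L.filter fun l => lend l ∈ X)
    (L.filter fun l => lend l ∈ Y)
  rw [← hLu, ← hLi] at hLkey
  have hLmod : iL L lend X + iL L lend Y = iL L lend (X ∪ Y) + iL L lend (X ∩ Y) := by
    rw [eL X, eL Y, eL (X ∪ Y), eL (X ∩ Y)]
    omega
  have hcard : X.card + Y.card = (X ∪ Y).card + (X ∩ Y).card :=
    (Finset.card_union_add_card_inter X Y).symm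
  have hu := h2 (X ∪ Y)
  have hi := h2 (X ∩ Y)
  unfold MixedTight at *
  constructor <;> push_cast at * <;> omega
end

section
/- Let G = (V, E, L) be a (2,0,3)-graded-sparse looped simple graph, X a mixed tight set and Y a pure tight set with |X ∩ Y| ≥ 2. Then X ∪ Y is a mixed tight set and X ∩ Y is a pure tight set. -/
attribute [local instance] Classical.propDecidable

section Aux
variable {V ι : Type*} [DecidableEq V]

lemma iE_mono (E : Finset (Sym2 V)) {S T : Finset V} (h : S ⊆ T) : iE E S ≤ iE E T := by
  apply Finset.card_le_card
  intro e he
  rw [Finset.mem_filter] at he ⊢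
  exact ⟨he.1, fun v hv => h (he.2 v hv)⟩

lemma iE_supermod (E : Finset (Sym2 V)) (X Y : Finset V) :
    iE E X + iE E Y ≤ iE E (X ∪ Y) + iE E (X ∩ Y) := by
  classical
  set FX := E.filter fun e => ∀ v ∈ e, v ∈ X with hFX
  set FY := E.filter fun e => ∀ v ∈ e, v ∈ Y with hFY
  have hinter : iE E (X ∩ Y) = (FX ∩ FY).card := by
    unfold iE
    apply congrArg Finset.card
    ext e
    simp only [hFX, hFY, Finset.mem_inter, Finset.mem_filter]
    constructor
    · rintro ⟨h1, h2⟩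
      exact ⟨⟨h1, fun v hv => (h2 v hv).1⟩, ⟨h1, fun v hv => (h2 v hv).2⟩⟩
    · rintro ⟨⟨h1, h2⟩, ⟨_, h3⟩⟩
      exact ⟨h1, fun v hv => ⟨h2 v hv, h3 v hv⟩⟩
  have hunion : (FX ∪ FY).card ≤ iE E (X ∪ Y) := by
    apply Finset.card_le_card
    intro e he
    rcases Finset.mem_union.mp he with h | h <;>
    · rw [hFX] at * ; rw [hFY] at *
      rw [Finset.mem_filter] at h ⊢
      refine ⟨h.1, fun v hv => Finset.mem_union.mpr ?_⟩
      first
        | exact Or.inl (h.2 v hv)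
        | exact Or.inr (h.2 v hv)
  have hkey := Finset.card_union_add_card_inter FX FY
  have h1 : iE E X = FX.card := rfl
  have h2 : iE E Y = FY.card := rfl
  omega

lemma iL_mono (L : Finset ι) (lend : ι → V) {S T : Finset V} (h : S ⊆ T) :
    iL L lend S ≤ iL L lend T := by
  apply Finset.card_le_card
  intro l hl
  simp only [Finset.mem_filter] at hl ⊢
  exact ⟨hl.1, h hl.2⟩

lemma iL_mod (L : Finset ι) (lend : ι → V) (X Y : Finset V) :
    iL L lend X + iL L lend Y = iL L lend (X ∪ Y) + iL L lend (X ∩ Y) := by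
  classical
  set FX := L.filter fun l => lend l ∈ X with hFX
  set FY := L.filter fun l => lend l ∈ Y with hFY
  have hinter : iL L lend (X ∩ Y) = (FX ∩ FY).card := by
    unfold iL
    apply congrArg Finset.card
    ext l
    simp only [hFX, hFY, Finset.mem_inter, Finset.mem_filter]
    tauto
  have hunion : iL L lend (X ∪ Y) = (FX ∪ FY).card := by
    unfold iL
    apply congrArg Finset.card
    ext l
    simp only [hFX, hFY, Finset.mem_union, Finset.mem_filter]
    tauto
  have hkey := Finset.card_union_add_card_inter FX FY
  have h1 : iL L lend X = FX.card := by
    unfold iL; apply congrArg Finset.card; ext l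
    simp only [hFX, Finset.mem_filter]
  have h2 : iL L lend Y = FY.card := by
    unfold iL; apply congrArg Finset.card; ext l
    simp only [hFY, Finset.mem_filter]
  omega

end Aux

/-- If `X` is mixed tight, `Y` is pure tight, and `|X ∩ Y| ≥ 2`, then `X ∪ Y` is mixed
tight and `X ∩ Y` is pure tight. -/
theorem mixed_pure {V ι : Type*} [Fintype V] [DecidableEq V]
    (E : Finset (Sym2 V)) (hE : ∀ e ∈ E, ¬ e.IsDiag) (L : Finset ι) (lend : ι → V)
    (hsp : GradedSparse E L lend) (X Y : Finset V)
    (hX : MixedTight E L lend X) (hY : PureTight E Y) (hcap : 2 ≤ (X ∩ Y).card) :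
    MixedTight E L lend (X ∪ Y) ∧ PureTight E (X ∩ Y) := by
  have hsup := iE_supermod E X Y
  have hmod := iL_mod L lend X Y
  have hmonoY : iE E Y ≤ iE E (X ∪ Y) := iE_mono E Finset.subset_union_right
  have hLmono : iL L lend (X ∩ Y) ≤ iL L lend Y := iL_mono L lend Finset.inter_subset_right
  have hcards := Finset.card_union_add_card_inter X Y
  have hYcard : 2 ≤ Y.card := le_trans hcap (Finset.card_le_card Finset.inter_subset_right)
  -- iE Y > 0
  have hYpos : 0 < iE E Y := by
    by_contra h
    push_neg at h
    have h0 : iE E Y = 0 := Nat.le_zero.mp h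
    unfold PureTight at hY
    rw [h0] at hY
    push_cast at hY
    omega
  have hCpos : 0 < iE E (X ∪ Y) := lt_of_lt_of_le hYpos hmonoY
  have hC : (iE E (X ∪ Y) : ℤ) ≤ 2 * (X ∪ Y).card - 3 := hsp.1 _ hCpos
  have hCD : (iE E (X ∪ Y) : ℤ) + iL L lend (X ∪ Y) ≤ 2 * (X ∪ Y).card := hsp.2 _
  have hA : (iE E (X ∩ Y) : ℤ) ≤ 2 * (X ∩ Y).card - 3 := by
    rcases Nat.eq_zero_or_pos (iE E (X ∩ Y)) with h | h
    · rw [h]; push_cast; omega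
    · exact hsp.1 _ h
  unfold MixedTight PureTight at *
  constructor <;>
  · push_cast at *
    omega
end

section
/- Let x_1 ≥ x_2 ≥ … ≥ x_m be positive integers with m ≥ 2, where each x_i ≥ 2, and suppose ∑_{i=1}^m (x_i − 1) ≥ 6. Then ∑_{i=1}^m (2 − 3/x_i) ≥ 2. -/
lemma aux_half_le (n : ℕ) (h : 2 ≤ n) : (1:ℚ)/2 ≤ 2 - 3/n := by
  have h2 : (2:ℚ) ≤ n := by exact_mod_cast h
  have h3 : (3:ℚ)/n ≤ 3/2 := by gcongr <;> norm_num
  linarith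

lemma aux_one_le (n : ℕ) (h : 3 ≤ n) : (1:ℚ) ≤ 2 - 3/n := by
  have h2 : (3:ℚ) ≤ n := by exact_mod_cast h
  have h3 : (3:ℚ)/n ≤ 3/3 := by gcongr <;> norm_num
  norm_num at h3
  linarith

/-- If `x₁ ≥ x₂ ≥ … ≥ x_m ≥ 2` are integers with `m ≥ 2` and `∑ (x_i - 1) ≥ 6`, then
`∑ (2 - 3/x_i) ≥ 2`. -/
theorem sum_two_sub_three_div_ge_two (m : ℕ) (hm : 2 ≤ m) (x : Fin m → ℕ)
    (hmono : ∀ i j : Fin m, i ≤ j → x j ≤ x i)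
    (h2 : ∀ i, 2 ≤ x i) (hsum : 6 ≤ ∑ i, (x i - 1)) :
    (2 : ℚ) ≤ ∑ i, (2 - 3 / (x i : ℚ)) := by
  rcases Nat.lt_or_ge m 4 with h4 | h4
  · interval_cases m
    · -- m = 2
      have ha := h2 0
      have hb := h2 1
      have hab := hmono 0 1 (by decide)
      rw [Fin.sum_univ_two] at hsum ⊢
      have hsum' : 8 ≤ x 0 + x 1 := by omega
      have hA : (0:ℚ) < x 0 := by exact_mod_cast Nat.lt_of_lt_of_le (by norm_num) ha
      have hB : (0:ℚ) < x 1 := by exact_mod_cast Nat.lt_of_lt_of_le (by norm_num) hb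
      have key : 3 * x 1 + 3 * x 0 ≤ 2 * (x 0 * x 1) := by nlinarith [ha, hb, hab, hsum']
      have keyQ : (3:ℚ) * x 1 + 3 * x 0 ≤ 2 * ((x 0 : ℚ) * x 1) := by exact_mod_cast key
      have hdiv : (3:ℚ)/(x 0) + 3/(x 1) ≤ 2 := by
        rw [div_add_div _ _ hA.ne' hB.ne', div_le_iff₀ (by positivity)]
        linarith
      linarith
    · -- m = 3
      have ha := h2 0
      have hb := h2 1
      have hc := h2 2
      have h01 := hmono 0 1 (by decide)
      have h02 := hmono 0 2 (by decide)
      rw [Fin.sum_univ_three] at hsum ⊢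
      have hx0 : 3 ≤ x 0 := by omega
      have := aux_one_le (x 0) hx0
      have := aux_half_le (x 1) hb
      have := aux_half_le (x 2) hc
      linarith
  · -- m ≥ 4
    have hle : ∑ i : Fin m, (1/2 : ℚ) ≤ ∑ i, (2 - 3/(x i : ℚ)) :=
      Finset.sum_le_sum fun i _ => aux_half_le _ (h2 i)
    rw [Finset.sum_const, Finset.card_univ, Fintype.card_fin, nsmul_eq_mul] at hle
    have hm4 : (4:ℚ) ≤ m := by exact_mod_cast h4
    linarith
end

section
/- Let m ≥ 1 be an integer and x₁ ≥ x₂ ≥ … ≥ x_m be integers with each x_i ≥ 2 and ∑_{i=1}^m (x_i − 1) ≥ 5, and additionally x₁ ≥ 6 if m = 1. Then ∑_{i=1}^m (2 − 3/x_i) ≥ 3/2. -/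
lemma term_lb (n : ℕ) (k : ℕ) (hk : 2 ≤ k) (h : k ≤ n) :
    (2 - 3 / (k : ℚ)) ≤ 2 - 3 / (n : ℚ) := by
  have hk' : (2:ℚ) ≤ k := by exact_mod_cast hk
  have hn : (k:ℚ) ≤ n := by exact_mod_cast h
  have : 3 / (n:ℚ) ≤ 3 / k := by
    apply div_le_div_of_nonneg_left (by norm_num) (by linarith) hn
  linarith

/-- If `x₁ ≥ x₂ ≥ … ≥ x_m ≥ 2` are integers with `m ≥ 1`, `∑ (x_i - 1) ≥ 5`, and
`x₁ ≥ 6` in case `m = 1`, then `∑ (2 - 3/x_i) ≥ 3/2`. -/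
theorem sum_two_sub_three_div_ge_three_halves (m : ℕ) (hm : 1 ≤ m) (x : Fin m → ℕ)
    (hmono : ∀ i j : Fin m, i ≤ j → x j ≤ x i)
    (h2 : ∀ i, 2 ≤ x i) (hsum : 5 ≤ ∑ i, (x i - 1))
    (hone : m = 1 → ∀ i, 6 ≤ x i) :
    (3 / 2 : ℚ) ≤ ∑ i, (2 - 3 / (x i : ℚ)) := by
  match m, hm with
  | 1, _ =>
    rw [Fin.sum_univ_one]
    have h6 := hone rfl 0
    have := term_lb (x 0) 6 (by norm_num) h6
    norm_num at this ⊢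
    linarith
  | 2, _ =>
    rw [Fin.sum_univ_two] at hsum ⊢
    have h0 := h2 0
    have h1 := h2 1
    have hm01 := hmono 0 1 (by decide)
    have hx0 : 4 ≤ x 0 := by omega
    have t0 := term_lb (x 0) 4 (by norm_num) hx0
    have t1 := term_lb (x 1) 2 (by norm_num) h1
    norm_num at t0 t1
    linarith
  | (k + 3), _ =>
    have hb : ∀ i ∈ Finset.univ, (1/2 : ℚ) ≤ 2 - 3 / (x i : ℚ) := by
      intro i _
      have := term_lb (x i) 2 (by norm_num) (h2 i)
      norm_num at this
      linarith
    have := Finset.card_nsmul_le_sum Finset.univ _ _ hb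
    simp only [Finset.card_univ, Fintype.card_fin, nsmul_eq_mul] at this
    have hk : (3:ℚ)/2 ≤ (k+3 : ℕ) * (1/2) := by
      push_cast; linarith [Nat.cast_nonneg (α := ℚ) k]
    linarith
end

section
/- Let G = (V, E, L) be a looped simple graph, L' ⊆ L, and let X = {X₀, X₁, …, X_k} be an admissible 1-thin cover of G − L'. If F ⊆ E ∪ L is (2,0,3)-graded-sparse (i.e., i_{F∩E}(S) ≤ 2|S| − 3 whenever S induces an edge of F, and |F ∩ (E(S) ∪ L(S))| ≤ 2|S| for all S), then |F| ≤ |L'| + 2|X₀| + ∑_{i=1}^k (2|X_i| − 3). -/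
attribute [local instance] Classical.propDecidable

/-- The set of vertices incident with a set `T` of edges (elements of `Sym2 V`). -/
noncomputable def vSetE {V : Type*} [Fintype V] (T : Finset (Sym2 V)) : Finset V :=
  T.biUnion fun e => Finset.univ.filter (· ∈ e)

/-- If `F ⊆ E ∪ L` is `(2,0,3)`-graded-sparse (given here by its edge part `FE` and loop
part `FL`) and `{X₀, X₁, …, X_k}` is an admissible 1-thin cover of `G - L'`, then
`|F| ≤ |L'| + 2|X₀| + ∑_{i=1}^k (2|X_i| - 3)`. -/
theorem card_sparse_le_cover_value {V ι : Type*} [Fintype V] [DecidableEq V] [DecidableEq ι]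
    (E : Finset (Sym2 V)) (hE : ∀ e ∈ E, ¬ e.IsDiag)
    (L : Finset ι) (lend : ι → V) (L' : Finset ι) (hL' : L' ⊆ L)
    (k : ℕ) (X : Fin (k + 1) → Finset V)
    -- `{X₀, X₁, …, X_k}` is a cover of `G - L'` …
    (hX2 : ∀ i : Fin (k + 1), i ≠ 0 → 2 ≤ (X i).card)
    (hcoverE : ∀ e ∈ E, ∃ i, ∀ v ∈ e, v ∈ X i)
    -- … which is admissible …
    (hadm₁ : ∀ l ∈ L \ L', lend l ∈ X 0)
    (hadm₂ : ∀ l ∈ L', lend l ∉ X 0)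
    -- … and 1-thin.
    (hthin : ∀ i j : Fin (k + 1), i ≠ j → (X i ∩ X j).card ≤ 1)
    -- `F = FE ∪ FL` is a `(2,0,3)`-graded-sparse subset of `E ∪ L`:
    (FE : Finset (Sym2 V)) (hFE : FE ⊆ E) (FL : Finset ι) (hFL : FL ⊆ L)
    (hsp₁ : ∀ T ⊆ FE, T.Nonempty → (T.card : ℤ) ≤ 2 * (vSetE T).card - 3)
    (hsp₂ : ∀ TE ⊆ FE, ∀ TL ⊆ FL,
      ((TE.card : ℤ) + TL.card) ≤ 2 * (vSetE TE ∪ TL.image lend).card) :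
    ((FE.card : ℤ) + FL.card) ≤
      (L'.card : ℤ) + 2 * (X 0).card +
        ∑ i ∈ Finset.univ.erase (0 : Fin (k + 1)), (2 * ((X i).card : ℤ) - 3) := by
  classical
  set f : Sym2 V → Fin (k + 1) := fun e =>
    if h : ∃ i, ∀ v ∈ e, v ∈ X i then h.choose else 0 with hf
  have hfprop : ∀ e ∈ FE, ∀ v ∈ e, v ∈ X (f e) := by
    intro e he v hv
    have hE' : ∃ i, ∀ v ∈ e, v ∈ X i := hcoverE e (hFE he)
    simp only [hf, dif_pos hE']
    exact hE'.choose_spec v hv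
  have hsub : ∀ i, vSetE (FE.filter fun e => f e = i) ⊆ X i := by
    intro i v hv
    simp only [vSetE, Finset.mem_biUnion, Finset.mem_filter, Finset.mem_univ, true_and] at hv
    obtain ⟨e, ⟨heFE, hfe⟩, hve⟩ := hv
    have := hfprop e heFE v hve
    rwa [hfe] at this
  have hcard : FE.card = ∑ i : Fin (k + 1), (FE.filter fun e => f e = i).card :=
    Finset.card_eq_sum_card_fiberwise (fun x _ => Finset.mem_univ _)
  have hb : ∀ i ∈ Finset.univ.erase (0 : Fin (k + 1)),
      ((FE.filter fun e => f e = i).card : ℤ) ≤ 2 * ((X i).card : ℤ) - 3 := by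
    intro i hi
    have hi0 : i ≠ 0 := (Finset.mem_erase.mp hi).1
    have hXi : (2 : ℤ) ≤ (X i).card := by exact_mod_cast hX2 i hi0
    rcases (FE.filter fun e => f e = i).eq_empty_or_nonempty with hT | hT
    · rw [hT]
      simp only [Finset.card_empty, Nat.cast_zero]
      linarith
    · have h1 := hsp₁ _ (Finset.filter_subset _ _) hT
      have h2 : ((vSetE (FE.filter fun e => f e = i)).card : ℤ) ≤ (X i).card := by
        exact_mod_cast Finset.card_le_card (hsub i)
      linarith
  have hsum : (∑ i ∈ Finset.univ.erase (0 : Fin (k + 1)),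
      ((FE.filter fun e => f e = i).card : ℤ)) ≤
      ∑ i ∈ Finset.univ.erase (0 : Fin (k + 1)), (2 * ((X i).card : ℤ) - 3) :=
    Finset.sum_le_sum hb
  have h0 : ((FE.filter fun e => f e = 0).card : ℤ) + ((FL \ L').card : ℤ) ≤
      2 * ((X 0).card : ℤ) := by
    have h := hsp₂ (FE.filter fun e => f e = 0) (Finset.filter_subset _ _) (FL \ L') Finset.sdiff_subset
    have hsub2 : vSetE (FE.filter fun e => f e = 0) ∪ (FL \ L').image lend ⊆ X 0 := by
      intro v hv
      rcases Finset.mem_union.mp hv with h1 | h1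
      · exact hsub 0 h1
      · obtain ⟨l, hl, rfl⟩ := Finset.mem_image.mp h1
        have hl' : l ∈ L \ L' := by
          rw [Finset.mem_sdiff] at hl ⊢
          exact ⟨hFL hl.1, hl.2⟩
        exact hadm₁ l hl'
    have h2 : ((vSetE (FE.filter fun e => f e = 0) ∪ (FL \ L').image lend).card : ℤ) ≤
        (X 0).card := by exact_mod_cast Finset.card_le_card hsub2
    linarith
  have hFLsplit : (FL ∩ L').card + (FL \ L').card = FL.card :=
    Finset.card_inter_add_card_sdiff FL L'
  have hFLL' : (FL ∩ L').card ≤ L'.card :=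
    Finset.card_le_card Finset.inter_subset_right
  have hFEsplit : (FE.card : ℤ) = ((FE.filter fun e => f e = 0).card : ℤ) +
      ∑ i ∈ Finset.univ.erase (0 : Fin (k + 1)), ((FE.filter fun e => f e = i).card : ℤ) := by
    rw [hcard]
    push_cast
    rw [← Finset.add_sum_erase Finset.univ _ (Finset.mem_univ (0 : Fin (k + 1)))]
  have hFLsplit' : ((FL ∩ L').card : ℤ) + ((FL \ L').card : ℤ) = FL.card := by
    exact_mod_cast hFLsplit
  have hFLL'' : ((FL ∩ L').card : ℤ) ≤ L'.card := by exact_mod_cast hFLL'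
  linarith
end

section
/- Let V be a finite set with |V| = 2n (n ≥ 1), and let L' be a finite set, X₀ ⊆ V, and X₁, …, X_k ⊆ V with |X_i| ≥ 2. Suppose each vertex v ∈ V ∖ X₀ satisfies ∑_{i : v ∈ X_i} (2 − 3/|X_i|) ≥ 2 − l(v)/2, where ∑_{v ∈ V∖X₀} l(v) = |L'| and 0 ≤ l(v) ≤ 1; each vertex v in Y ⊆ X₀ satisfies ∑_{i : v ∈ X_i}(2 − 3/|X_i|) = 2 − 3/|X₀|; each vertex v in Z = X₀ ∖ Y satisfies ∑_{i : v ∈ X_i}(2 − 3/|X_i|) ≥ 2 − 3/|X₀| + 1/2; the identity ∑_{i=0}^k |X_i|(2 − 3/|X_i|) = ∑_{v∈V} ∑_{i : v ∈ X_i}(2 − 3/|X_i|) holds; and |Z| + |L'| ≥ 6 with X₀ ≠ ∅. Then |L'| + 2|X₀| + ∑_{i=1}^k (2|X_i| − 3) ≥ 2|V| + 3. -/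
open Finset

/-- Case 3 counting computation: under the stated per-vertex lower bounds on
`∑_{i : v ∈ X_i} (2 - 3/|X_i|)` for vertices of `V ∖ X₀`, `Y` and `Z = X₀ ∖ Y`, the
double-counting identity, `|Z| + |L'| ≥ 6` and `X₀ ≠ ∅`, the cover value
`|L'| + 2|X₀| + ∑_{i=1}^k (2|X_i| - 3)` is at least `2|V| + 3`. -/
theorem cover_value_ge_case3 {V : Type*} [Fintype V] [DecidableEq V]
    (n : ℕ) (hn : 1 ≤ n) (hV : Fintype.card V = 2 * n)
    (k : ℕ) (X : Fin (k + 1) → Finset V)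
    (hX2 : ∀ i : Fin (k + 1), i ≠ 0 → 2 ≤ (X i).card)
    (l : V → ℕ) (hl : ∀ v, l v ≤ 1)
    (Lcard : ℕ) (hLcard : ∑ v ∈ univ.filter (fun v => v ∉ X 0), l v = Lcard)
    (Y Z : Finset V) (hY : Y ⊆ X 0) (hZ : Z = X 0 \ Y)
    (hout : ∀ v : V, v ∉ X 0 →
      (2 : ℚ) - (l v : ℚ) / 2 ≤
        ∑ i ∈ univ.filter (fun i : Fin (k + 1) => v ∈ X i), (2 - 3 / ((X i).card : ℚ)))
    (hYbound : ∀ v ∈ Y,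
      ∑ i ∈ univ.filter (fun i : Fin (k + 1) => v ∈ X i), (2 - 3 / ((X i).card : ℚ)) =
        2 - 3 / ((X 0).card : ℚ))
    (hZbound : ∀ v ∈ Z,
      (2 : ℚ) - 3 / ((X 0).card : ℚ) + 1 / 2 ≤
        ∑ i ∈ univ.filter (fun i : Fin (k + 1) => v ∈ X i), (2 - 3 / ((X i).card : ℚ)))
    (hid : ∑ i : Fin (k + 1), ((X i).card : ℚ) * (2 - 3 / ((X i).card : ℚ)) =
      ∑ v : V, ∑ i ∈ univ.filter (fun i : Fin (k + 1) => v ∈ X i),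
        (2 - 3 / ((X i).card : ℚ)))
    (hZL : 6 ≤ Z.card + Lcard) (hX0 : (X 0).Nonempty) :
    (2 : ℚ) * Fintype.card V + 3 ≤
      (Lcard : ℚ) + 2 * (X 0).card +
        ∑ i ∈ univ.erase (0 : Fin (k + 1)), (2 * ((X i).card : ℚ) - 3) := by

  classical
  set S : V → ℚ := fun v => ∑ i ∈ univ.filter (fun i : Fin (k + 1) => v ∈ X i),
    (2 - 3 / ((X i).card : ℚ)) with hSdef
  have hcard : ∀ i : Fin (k + 1), ((X i).card : ℚ) ≠ 0 := by
    intro i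
    rcases eq_or_ne i 0 with rfl | h
    · exact_mod_cast hX0.card_pos.ne'
    · have := hX2 i h; positivity
  have hterm : ∀ i : Fin (k + 1),
      ((X i).card : ℚ) * (2 - 3 / ((X i).card : ℚ)) = 2 * (X i).card - 3 := by
    intro i; field_simp [hcard i]
  -- LHS of hid
  have hL : ∑ i : Fin (k + 1), ((X i).card : ℚ) * (2 - 3 / ((X i).card : ℚ)) =
      (2 * ((X 0).card : ℚ) - 3) +
        ∑ i ∈ univ.erase (0 : Fin (k + 1)), (2 * ((X i).card : ℚ) - 3) := by
    rw [← Finset.add_sum_erase univ _ (mem_univ (0 : Fin (k + 1)))]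
    rw [hterm 0]
    congr 1
    exact Finset.sum_congr rfl fun i _ => hterm i
  -- split RHS over vertices
  have hsplitV : ∑ v : V, S v =
      ∑ v ∈ univ.filter (fun v => v ∈ X 0), S v +
        ∑ v ∈ univ.filter (fun v => v ∉ X 0), S v :=
    (Finset.sum_filter_add_sum_filter_not univ _ S).symm
  have hfilt : univ.filter (fun v => v ∈ X 0) = X 0 := by
    ext v; simp
  have hsplitX0 : ∑ v ∈ X 0, S v = ∑ v ∈ Z, S v + ∑ v ∈ Y, S v := by
    rw [hZ]; exact (Finset.sum_sdiff hY).symm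
  -- bound on outside vertices
  have hcardout : (univ.filter (fun v => v ∉ X 0)).card = Fintype.card V - (X 0).card := by
    rw [Finset.filter_not, hfilt, Finset.card_sdiff_of_subset (Finset.subset_univ _), Finset.card_univ]
  have hout2 : (2 : ℚ) * (Fintype.card V - (X 0).card) - (Lcard : ℚ) / 2 ≤
      ∑ v ∈ univ.filter (fun v => v ∉ X 0), S v := by
    calc (2 : ℚ) * (Fintype.card V - (X 0).card) - (Lcard : ℚ) / 2
        = ∑ v ∈ univ.filter (fun v => v ∉ X 0), ((2 : ℚ) - (l v : ℚ) / 2) := by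
          rw [Finset.sum_sub_distrib, Finset.sum_const, ← Finset.sum_div, hcardout]
          have : ((∑ v ∈ univ.filter (fun v => v ∉ X 0), (l v : ℚ))) = (Lcard : ℚ) := by
            rw [← hLcard]; push_cast; ring
          rw [this]
          have hle : (X 0).card ≤ Fintype.card V := Finset.card_le_univ _
          rw [nsmul_eq_mul, Nat.cast_sub hle]
          ring
      _ ≤ _ := Finset.sum_le_sum fun v hv => hout v (by simpa using hv)
  -- Y sum
  have hYsum : ∑ v ∈ Y, S v = (Y.card : ℚ) * (2 - 3 / ((X 0).card : ℚ)) := by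
    rw [Finset.sum_congr rfl hYbound, Finset.sum_const, nsmul_eq_mul]
  -- Z sum
  have hZsum : (Z.card : ℚ) * (2 - 3 / ((X 0).card : ℚ) + 1 / 2) ≤ ∑ v ∈ Z, S v := by
    have := Finset.card_nsmul_le_sum Z S _ hZbound
    rwa [nsmul_eq_mul] at this
  have hYZcard : (Y.card : ℚ) + (Z.card : ℚ) = ((X 0).card : ℚ) := by
    have : Z.card = (X 0).card - Y.card := by rw [hZ]; exact Finset.card_sdiff_of_subset hY
    have hle : Y.card ≤ (X 0).card := Finset.card_le_card hY
    push_cast [this, Nat.cast_sub hle]; ring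
  -- combine Y and Z bounds
  have hX0sum : 2 * ((X 0).card : ℚ) - 3 + (Z.card : ℚ) / 2 ≤
      ∑ v ∈ Z, S v + ∑ v ∈ Y, S v := by
    have h0 : ((X 0).card : ℚ) * (2 - 3 / ((X 0).card : ℚ)) = 2 * (X 0).card - 3 := hterm 0
    have hyz2 : (Y.card : ℚ) * (2 - 3 / ((X 0).card : ℚ)) +
        (Z.card : ℚ) * (2 - 3 / ((X 0).card : ℚ)) = 2 * ((X 0).card : ℚ) - 3 := by
      rw [← add_mul, hYZcard]; exact h0
    have e : (Z.card : ℚ) * (2 - 3 / ((X 0).card : ℚ) + 1 / 2) =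
        (Z.card : ℚ) * (2 - 3 / ((X 0).card : ℚ)) + (Z.card : ℚ) / 2 := by ring
    linarith [hZsum, hYsum, hyz2, e]
  have hZL' : (6 : ℚ) ≤ (Z.card : ℚ) + (Lcard : ℚ) := by exact_mod_cast hZL
  have hid' := hid
  rw [hL] at hid'
  rw [hsplitV, hfilt, hsplitX0] at hid'
  linarith [hout2, hX0sum]
end
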